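/- Let d be a power of 2, let F be a symmetric m×m real matrix, let A' ⊆ A ⊆ [m] with A' nonempty, let Δ_A = I_A − (1/|A|)·𝟙_A·𝟙_Aᵀ and Δ_{A'} = I_{A'} − (1/|A'|)·𝟙_{A'}·𝟙_{A'}ᵀ, and let N be a symmetric doubly stochastic m×m matrix such that N_{ij} = 0 whenever exactly one of i, j belongs to A'. Then tr((Δ_{A'}·N·F·N·Δ_{A'})^(2d)) ≤ tr(Δ_{A'}·N^(4d)·(Δ_A·F·Δ_A)^(2d)). -/

import Mathlib

open Matrix

/-- The `m × m` matrix `Δ_B = I_B − (1/|B|)·𝟙_B 𝟙_Bᵀ` for a subset `B ⊆ [m]`. -/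
noncomputable def DeltaA (m : ℕ) (B : Finset (Fin m)) : Matrix (Fin m) (Fin m) ℝ :=
  Matrix.diagonal (fun i => if i ∈ B then (1 : ℝ) else 0)
    - ((B.card : ℝ)⁻¹) • Matrix.vecMulVec (fun i => if i ∈ B then (1 : ℝ) else 0)
        (fun i => if i ∈ B then (1 : ℝ) else 0)

/-!
Write `Δ = Δ_{A'}` and `S = Δ N`. The block condition makes `N` commute with `Δ`, and `A' ⊆ A`
gives `Δ Δ_A = Δ_A Δ = Δ`, so `S` is symmetric, `S = S Δ_A = Δ_A S`, and
`Δ N F N Δ = S G S` with `G = Δ_A F Δ_A`. By cyclicity the left-hand trace is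
`tr((S² G)^(2d))`, and `S^(4d) = Δ N^(4d)` since `Δ` is idempotent. What remains is the
inequality `tr((X Y)^(2^k)) ≤ tr(X^(2^k) Y^(2^k))` for symmetric `X`, `Y`. It is proved by
induction together with `tr(C^(2^(k+1))) ≤ tr((C Cᵀ)^(2^k))`; the base case of both is the
Cauchy–Schwarz bound `2 tr(P Q) ≤ tr(P Pᵀ) + tr(Q Qᵀ)`.
-/

open Finset

theorem mul_mul_mul_mul_eq_of_absorbs {α : Type*} [Semigroup α] {P D N F : α}
    (hPD : P * D = P) (hDP : D * P = P) (hNP : Commute N P) :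
    P * N * F * N * P = P * N * (D * F * D) * (P * N) := by
  have hSD : P * N * D = P * N := by rw [← hNP.eq, mul_assoc, hPD]
  have hDS : D * (P * N) = P * N := by rw [← mul_assoc, hDP]
  calc P * N * F * N * P = P * N * F * (P * N) := by rw [mul_assoc _ N P, hNP.eq]
    _ = P * N * D * F * (D * (P * N)) := by rw [hSD, hDS]
    _ = P * N * (D * F * D) * (P * N) := by simp only [mul_assoc]

section TraceInequalities

variable {n R : Type*} [Fintype n] [CommRing R]

theorem two_mul_trace_mul_le [LinearOrder R] [IsStrictOrderedRing R] (P Q : Matrix n n R) :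
    2 * trace (P * Q) ≤ trace (P * Pᵀ) + trace (Q * Qᵀ) := by
  simp only [trace, Matrix.diag, mul_apply, transpose_apply, Finset.mul_sum]
  rw [Finset.sum_comm (f := fun i j => Q i j * Q i j), ← Finset.sum_add_distrib]
  refine Finset.sum_le_sum fun i _ => ?_
  rw [← Finset.sum_add_distrib]
  refine Finset.sum_le_sum fun j _ => ?_
  nlinarith [two_mul_le_add_sq (P i j) (Q j i)]

variable [DecidableEq n]

theorem trace_pow_mul_comm (U V : Matrix n n R) (q : ℕ) :
    trace ((U * V) ^ q) = trace ((V * U) ^ q) := by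
  cases q with
  | zero => rfl
  | succ q =>
    have h : (U * V) ^ q * U = U * (V * U) ^ q :=
      ((SemiconjBy.pow_right (mul_assoc U V U).symm q).eq).symm
    rw [pow_succ, ← mul_assoc, h, mul_assoc, trace_mul_comm, mul_assoc, ← pow_succ]

variable [LinearOrder R]

theorem trace_mul_pow_two_pow_succ_le {k : ℕ}
    (hK : ∀ C : Matrix n n R, trace (C ^ 2 ^ (k + 1)) ≤ trace ((C * Cᵀ) ^ 2 ^ k))
    (hL : ∀ A B : Matrix n n R, A.IsSymm → B.IsSymm →
      trace ((A * B) ^ 2 ^ k) ≤ trace (A ^ 2 ^ k * B ^ 2 ^ k))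
    {A B : Matrix n n R} (hA : A.IsSymm) (hB : B.IsSymm) :
    trace ((A * B) ^ 2 ^ (k + 1)) ≤ trace (A ^ 2 ^ (k + 1) * B ^ 2 ^ (k + 1)) := by
  have hsq : ∀ Z : Matrix n n R, Z ^ 2 ^ (k + 1) = (Z ^ 2) ^ 2 ^ k := fun Z => by
    rw [pow_succ', pow_mul]
  calc trace ((A * B) ^ 2 ^ (k + 1)) ≤ trace ((A * B * (A * B)ᵀ) ^ 2 ^ k) := hK _
    _ = trace ((A ^ 2 * B ^ 2) ^ 2 ^ k) := by
      rw [transpose_mul, hA.eq, hB.eq, show A * B * (B * A) = A * (B ^ 2 * A) by noncomm_ring,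
        trace_pow_mul_comm, show B ^ 2 * A * A = B ^ 2 * A ^ 2 by noncomm_ring,
        trace_pow_mul_comm]
    _ ≤ trace ((A ^ 2) ^ 2 ^ k * (B ^ 2) ^ 2 ^ k) := hL _ _ (hA.pow 2) (hB.pow 2)
    _ = trace (A ^ 2 ^ (k + 1) * B ^ 2 ^ (k + 1)) := by rw [hsq, hsq]

variable [IsStrictOrderedRing R]

theorem trace_pow_two_pow_succ_succ_le {k : ℕ}
    (hK : ∀ C : Matrix n n R, trace (C ^ 2 ^ (k + 1)) ≤ trace ((C * Cᵀ) ^ 2 ^ k))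
    (hL : ∀ A B : Matrix n n R, A.IsSymm → B.IsSymm →
      trace ((A * B) ^ 2 ^ k) ≤ trace (A ^ 2 ^ k * B ^ 2 ^ k))
    (C : Matrix n n R) : trace (C ^ 2 ^ (k + 2)) ≤ trace ((C * Cᵀ) ^ 2 ^ (k + 1)) := by
  set X := Cᵀ * C
  set Y := C * Cᵀ
  have hX : X.IsSymm := isSymm_transpose_mul_self C
  have hY : Y.IsSymm := isSymm_mul_transpose_self C
  have hsq : ∀ Z : Matrix n n R, Z ^ 2 ^ k * Z ^ 2 ^ k = Z ^ 2 ^ (k + 1) := fun Z => by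
    rw [← pow_add, ← two_mul, ← pow_succ']
  have hamgm := two_mul_trace_mul_le (X ^ 2 ^ k) (Y ^ 2 ^ k)
  rw [(hX.pow _).eq, (hY.pow _).eq, hsq, hsq, trace_pow_mul_comm] at hamgm
  calc trace (C ^ 2 ^ (k + 2)) = trace ((C ^ 2) ^ 2 ^ (k + 1)) := by
        rw [pow_succ' 2 (k + 1), pow_mul]
    _ ≤ trace ((C ^ 2 * (C ^ 2)ᵀ) ^ 2 ^ k) := hK _
    _ = trace ((X * Y) ^ 2 ^ k) := by
      rw [transpose_pow, sq, sq, show C * C * (Cᵀ * Cᵀ) = C * C * Cᵀ * Cᵀ by noncomm_ring,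
        trace_pow_mul_comm, show Cᵀ * (C * C * Cᵀ) = X * Y by simp only [X, Y, mul_assoc]]
    _ ≤ trace (X ^ 2 ^ k * Y ^ 2 ^ k) := hL X Y hX hY
    _ ≤ trace (Y ^ 2 ^ (k + 1)) := by linarith

theorem trace_pow_two_pow_succ_le_and_trace_mul_pow_two_pow_le (k : ℕ) :
    (∀ C : Matrix n n R, trace (C ^ 2 ^ (k + 1)) ≤ trace ((C * Cᵀ) ^ 2 ^ k)) ∧
      ∀ A B : Matrix n n R, A.IsSymm → B.IsSymm →
        trace ((A * B) ^ 2 ^ k) ≤ trace (A ^ 2 ^ k * B ^ 2 ^ k) := by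
  induction k with
  | zero =>
    refine ⟨fun C => ?_, fun A B _ _ => by simp⟩
    simp only [zero_add, pow_one, pow_zero, sq]
    linarith [two_mul_trace_mul_le C C]
  | succ k ih =>
    exact ⟨trace_pow_two_pow_succ_succ_le ih.1 ih.2,
      fun _ _ hA hB => trace_mul_pow_two_pow_succ_le ih.1 ih.2 hA hB⟩

theorem trace_mul_pow_two_pow_le (k : ℕ) {A B : Matrix n n R} (hA : A.IsSymm) (hB : B.IsSymm) :
    trace ((A * B) ^ 2 ^ k) ≤ trace (A ^ 2 ^ k * B ^ 2 ^ k) :=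
  (trace_pow_two_pow_succ_le_and_trace_mul_pow_two_pow_le k).2 A B hA hB

end TraceInequalities

section IndicatorVec

variable {n : Type*} [DecidableEq n]

def indicatorVec (B : Finset n) : n → ℝ := fun i => if i ∈ B then 1 else 0

theorem indicatorVec_mul_of_subset {B' B : Finset n} (h : B' ⊆ B) :
    indicatorVec B' * indicatorVec B = indicatorVec B' := by
  ext i
  by_cases hi : i ∈ B'
  · simp [indicatorVec, hi, h hi]
  · simp [indicatorVec, hi]

theorem mul_indicatorVec_comm {N : Matrix n n ℝ} {B : Finset n}
    (hblock : ∀ i j, (i ∈ B ∧ j ∉ B) ∨ (i ∉ B ∧ j ∈ B) → N i j = 0) (i j : n) :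
    N i j * indicatorVec B j = indicatorVec B i * N i j := by
  by_cases hi : i ∈ B <;> by_cases hj : j ∈ B <;> simp [indicatorVec, hi, hj, hblock i j]

variable [Fintype n]

theorem indicatorVec_dotProduct_of_subset {B' B : Finset n} (h : B' ⊆ B) :
    indicatorVec B' ⬝ᵥ indicatorVec B = #B' := by
  simp only [dotProduct, ← Pi.mul_apply, indicatorVec_mul_of_subset h]
  simp [indicatorVec]

variable {N : Matrix n n ℝ} {B : Finset n}

theorem mulVec_indicatorVec (hrow : ∀ i, ∑ j, N i j = 1)
    (hblock : ∀ i j, (i ∈ B ∧ j ∉ B) ∨ (i ∉ B ∧ j ∈ B) → N i j = 0) :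
    N *ᵥ indicatorVec B = indicatorVec B := by
  ext i
  simp only [mulVec, dotProduct, mul_indicatorVec_comm hblock, ← Finset.mul_sum, hrow, mul_one]

theorem indicatorVec_vecMul (hcol : ∀ j, ∑ i, N i j = 1)
    (hblock : ∀ i j, (i ∈ B ∧ j ∉ B) ∨ (i ∉ B ∧ j ∈ B) → N i j = 0) :
    indicatorVec B ᵥ* N = indicatorVec B := by
  ext j
  simp only [vecMul, dotProduct, ← mul_indicatorVec_comm hblock, ← Finset.sum_mul, hcol, one_mul]

theorem commute_diagonal_indicatorVec
    (hblock : ∀ i j, (i ∈ B ∧ j ∉ B) ∨ (i ∉ B ∧ j ∈ B) → N i j = 0) :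
    Commute N (diagonal (indicatorVec B)) := by
  ext i j
  rw [mul_diagonal, diagonal_mul, mul_indicatorVec_comm hblock]

end IndicatorVec

section DeltaA

variable {m : ℕ}

theorem DeltaA_eq (B : Finset (Fin m)) :
    DeltaA m B =
      diagonal (indicatorVec B) - (#B : ℝ)⁻¹ • vecMulVec (indicatorVec B) (indicatorVec B) :=
  rfl

theorem isSymm_DeltaA (B : Finset (Fin m)) : (DeltaA m B).IsSymm :=
  (isSymm_diagonal _).sub (IsSymm.smul (transpose_vecMulVec _ _) _)

theorem DeltaA_mul_DeltaA_eq_left {B' B : Finset (Fin m)} (hne : B'.Nonempty) (h : B' ⊆ B) :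
    DeltaA m B' * DeltaA m B = DeltaA m B' := by
  set u' := indicatorVec B'
  set u := indicatorVec B
  have hmul : u' * u = u' := indicatorVec_mul_of_subset h
  have hdiag : diagonal u' * diagonal u = diagonal u' := by
    rw [diagonal_mul_diagonal]; exact congrArg diagonal hmul
  have hdiag_outer : diagonal u' * vecMulVec u u = vecMulVec u' u := by
    rw [mul_vecMulVec, funext (mulVec_diagonal u' u)]; exact congrArg (vecMulVec · u) hmul
  have houter_diag : vecMulVec u' u' * diagonal u = vecMulVec u' u' := by
    rw [vecMulVec_mul, funext (vecMul_diagonal u' u)]; exact congrArg (vecMulVec u') hmul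
  have houter : vecMulVec u' u' * vecMulVec u u = (#B' : ℝ) • vecMulVec u' u := by
    rw [vecMulVec_mul_vecMulVec, indicatorVec_dotProduct_of_subset h, vecMulVec_smul]
  have hcard : (#B' : ℝ) ≠ 0 := by exact_mod_cast hne.card_pos.ne'
  rw [DeltaA_eq, DeltaA_eq, sub_mul, mul_sub, mul_sub, smul_mul_assoc, mul_smul_comm,
    mul_smul_comm, smul_mul_assoc, hdiag, hdiag_outer, houter_diag, houter, smul_smul, smul_smul,
    inv_mul_cancel_right₀ hcard]
  abel

theorem DeltaA_mul_DeltaA_eq_right {B' B : Finset (Fin m)} (hne : B'.Nonempty) (h : B' ⊆ B) :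
    DeltaA m B * DeltaA m B' = DeltaA m B' := by
  simpa only [transpose_mul, (isSymm_DeltaA _).eq] using
    congrArg transpose (DeltaA_mul_DeltaA_eq_left hne h)

theorem isIdempotentElem_DeltaA {B : Finset (Fin m)} (hne : B.Nonempty) :
    IsIdempotentElem (DeltaA m B) :=
  DeltaA_mul_DeltaA_eq_left hne subset_rfl

theorem commute_DeltaA {N : Matrix (Fin m) (Fin m) ℝ} {B : Finset (Fin m)}
    (hrow : ∀ i, ∑ j, N i j = 1) (hcol : ∀ j, ∑ i, N i j = 1)
    (hblock : ∀ i j, (i ∈ B ∧ j ∉ B) ∨ (i ∉ B ∧ j ∈ B) → N i j = 0) :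
    Commute N (DeltaA m B) := by
  have houter : Commute N (vecMulVec (indicatorVec B) (indicatorVec B)) := by
    rw [commute_iff_eq, mul_vecMulVec, vecMulVec_mul, mulVec_indicatorVec hrow hblock,
      indicatorVec_vecMul hcol hblock]
  exact (commute_diagonal_indicatorVec hblock).sub_right (houter.smul_right _)

end DeltaA

theorem stmt_19_general (m : ℕ) (d : ℕ) (hd : ∃ j : ℕ, d = 2 ^ j)
    (F : Matrix (Fin m) (Fin m) ℝ) (hF : F.IsSymm)
    (A' A : Finset (Fin m)) (hsub : A' ⊆ A) (hne : A'.Nonempty)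
    (N : Matrix (Fin m) (Fin m) ℝ) (hNsym : N.IsSymm)
    (hNrow : ∀ i, ∑ j, N i j = 1) (hNcol : ∀ j, ∑ i, N i j = 1)
    (hNzero : ∀ i j, (i ∈ A' ∧ j ∉ A') ∨ (i ∉ A' ∧ j ∈ A') → N i j = 0) :
    Matrix.trace ((DeltaA m A' * N * F * N * DeltaA m A') ^ (2 * d))
      ≤ Matrix.trace (DeltaA m A' * N ^ (4 * d) * (DeltaA m A * F * DeltaA m A) ^ (2 * d)) := by
  obtain ⟨j, rfl⟩ := hd
  set P := DeltaA m A'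
  set D := DeltaA m A
  have hNP : Commute N P := commute_DeltaA hNrow hNcol hNzero
  have hS : (P * N).IsSymm := by
    rw [IsSymm, transpose_mul, hNsym.eq, (isSymm_DeltaA A').eq, hNP.eq]
  have hG : (D * F * D).IsSymm := by
    rw [IsSymm, transpose_mul, transpose_mul, (isSymm_DeltaA A).eq, hF.eq, mul_assoc]
  have hpow (k : ℕ) (hk : k ≠ 0) : (P * N) ^ k = P * N ^ k := by
    rw [hNP.symm.mul_pow, (isIdempotentElem_DeltaA hne).pow_eq hk]
  calc trace ((P * N * F * N * P) ^ (2 * 2 ^ j))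
      = trace ((P * N * (D * F * D) * (P * N)) ^ 2 ^ (j + 1)) := by
        rw [mul_mul_mul_mul_eq_of_absorbs (DeltaA_mul_DeltaA_eq_left hne hsub)
          (DeltaA_mul_DeltaA_eq_right hne hsub) hNP, pow_succ']
    _ = trace (((P * N) ^ 2 * (D * F * D)) ^ 2 ^ (j + 1)) := by
        rw [trace_pow_mul_comm, sq]; simp only [mul_assoc]
    _ ≤ trace (((P * N) ^ 2) ^ 2 ^ (j + 1) * (D * F * D) ^ 2 ^ (j + 1)) :=
        trace_mul_pow_two_pow_le (j + 1) (hS.pow 2) hG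
    _ = trace (P * N ^ (4 * 2 ^ j) * (D * F * D) ^ (2 * 2 ^ j)) := by
        rw [← pow_mul, hpow _ (by positivity), pow_succ']
        ring_nf

/-- For `d` a power of two, `F` symmetric, `A' ⊆ A ⊆ [m]` with `A'` nonempty, and
`N` symmetric doubly stochastic vanishing on entries with exactly one index in `A'`,
`tr((Δ_{A'}·N·F·N·Δ_{A'})^(2d)) ≤ tr(Δ_{A'}·N^(4d)·(Δ_A·F·Δ_A)^(2d))`. -/
theorem stmt_19 (m : ℕ) (d : ℕ) (hd : ∃ j : ℕ, d = 2 ^ j)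
    (F : Matrix (Fin m) (Fin m) ℝ) (hF : F.IsSymm)
    (A' A : Finset (Fin m)) (hsub : A' ⊆ A) (hne : A'.Nonempty)
    (N : Matrix (Fin m) (Fin m) ℝ) (hNsym : N.IsSymm)
    (hNnn : ∀ i j, 0 ≤ N i j) (hNrow : ∀ i, ∑ j, N i j = 1) (hNcol : ∀ j, ∑ i, N i j = 1)
    (hNzero : ∀ i j, (i ∈ A' ∧ j ∉ A') ∨ (i ∉ A' ∧ j ∈ A') → N i j = 0) :
    Matrix.trace ((DeltaA m A' * N * F * N * DeltaA m A') ^ (2 * d))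
      ≤ Matrix.trace (DeltaA m A' * N ^ (4 * d) * (DeltaA m A * F * DeltaA m A) ^ (2 * d)) :=
  stmt_19_general m d hd F hF A' A hsub hne N hNsym hNrow hNcol hNzero
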